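/- For every λ ∈ ℝ, the span of convergent words in the alphabet ℕ* is closed under the λ-shuffle product taken with respect to the semigroup (ℕ*,+): if w and w' are convergent words then w ⧢_λ w' is a finite linear combination of convergent words, so (𝓦^conv_{ℕ*}, ∅, ⧢_λ) is a subalgebra of (𝓦_{ℕ*}, ∅, ⧢_λ). -/
import Mathlib


/-! ### Words and shuffle products -/

/-- `𝓦_Ω`: the free `ℝ`-vector space on words written in the alphabet `Ω`. -/
abbrev WAlg (Ω : Type) := List Ω →₀ ℝ

/-- The basis element of `𝓦_Ω` corresponding to a word. -/
noncomputable def wdelta {Ω : Type} (w : List Ω) : WAlg Ω := Finsupp.single w 1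

/-- The `λ`-shuffle product of two words with respect to the (semigroup) product `mul`
on `Ω`, as an element of `𝓦_Ω`.  For `lam = 1` this is the stuffle product, for
`lam = -1` the anti-stuffle product and for `lam = 0` the usual shuffle product. -/
noncomputable def shw {Ω : Type} (mul : Ω → Ω → Ω) (lam : ℝ) : List Ω → List Ω → WAlg Ω
  | [], w => wdelta w
  | a :: u, [] => wdelta (a :: u)
  | a :: u, b :: v =>
      Finsupp.mapDomain (a :: ·) (shw mul lam u (b :: v)) +
      Finsupp.mapDomain (b :: ·) (shw mul lam (a :: u) v) +
      lam • Finsupp.mapDomain (mul a b :: ·) (shw mul lam u v)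
termination_by w₁ w₂ => w₁.length + w₂.length
decreasing_by all_goals (simp; try omega)

/-- A word over `ℕ* = {1,2,…}` is convergent when it is empty or its first letter
is at least `2`. -/
def ConvWordN (w : List ℕ+) : Prop := ∀ a, w.head? = some a → 2 ≤ (a : ℕ)

/-- **Statement 13** (Lemma `lem:subalgebra_shuffle_lambda`).
For every `λ ∈ ℝ`, the span of convergent words over `ℕ*` is closed under the `λ`-shuffle
product taken with respect to the semigroup `(ℕ*, +)`: the `λ`-shuffle of two convergent
words is a finite linear combination of convergent words. -/
theorem statement13 (lam : ℝ) (w w' : List ℕ+) (h : ConvWordN w) (h' : ConvWordN w') :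
    ∀ u ∈ (shw (fun a b : ℕ+ => a + b) lam w w').support, ConvWordN u := by
  intro u hu
  match w, w' with
  | [], v =>
      rw [shw] at hu
      have : u = v := by
        have := Finsupp.support_single_subset hu
        simpa using this
      subst this; exact h'
  | a :: u', [] =>
      rw [shw] at hu
      have : u = a :: u' := by
        have := Finsupp.support_single_subset hu
        simpa using this
      subst this; exact h
  | a :: u', b :: v' =>
      rw [shw] at hu
      have ha : 2 ≤ (a : ℕ) := h a rfl
      have hb : 2 ≤ (b : ℕ) := h' b rfl
      have hu2 := Finsupp.support_add hu
      rcases Finset.mem_union.mp hu2 with hu3 | hu3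
      · rcases Finset.mem_union.mp (Finsupp.support_add hu3) with hu4 | hu4
        · obtain ⟨t, _, ht⟩ := Finset.mem_image.mp (Finsupp.mapDomain_support hu4)
          intro c hc
          rw [← ht] at hc
          simp only [List.head?] at hc
          obtain rfl : a = c := by injection hc
          exact ha
        · obtain ⟨t, _, ht⟩ := Finset.mem_image.mp (Finsupp.mapDomain_support hu4)
          intro c hc
          rw [← ht] at hc
          simp only [List.head?] at hc
          obtain rfl : b = c := by injection hc
          exact hb
      · have hu4 : u ∈ (Finsupp.mapDomain ((a + b) :: ·)
            (shw (fun a b : ℕ+ => a + b) lam u' v')).support :=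
          Finsupp.support_smul hu3
        obtain ⟨t, _, ht⟩ := Finset.mem_image.mp (Finsupp.mapDomain_support hu4)
        intro c hc
        rw [← ht] at hc
        simp only [List.head?] at hc
        obtain rfl : a + b = c := by injection hc
        have : 1 ≤ (a : ℕ) := a.one_le
        have : 1 ≤ (b : ℕ) := b.one_le
        simp [PNat.add_coe]
        omega
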